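/- Let Ω ⊆ ℂ be open and U: Ω → ℂ smooth. Suppose ψ = (ψ₁, ψ₂) satisfies ∂̄ψ₁ = conj(U)ψ₂, ∂ψ₂ = −Uψ₁, and φ = (φ₁, φ₂) satisfies ∂̄φ₁ = Uφ₂, ∂φ₂ = −conj(U)φ₁, all smooth on Ω. Define Y₁ = (i/2)(conj(φ₂)conj(ψ₂) + φ₁ψ₁), Y₂ = (1/2)(conj(φ₂)conj(ψ₂) − φ₁ψ₁), Y₃ = (1/2)(conj(φ₂)ψ₁ + φ₁conj(ψ₂)), Y₄ = (i/2)(conj(φ₂)ψ₁ − φ₁conj(ψ₂)). Then for each k = 1, 2, 3, 4, ∂̄Y_k = ∂(conj(Y_k)) on Ω; equivalently each 1-form Y_k dz + conj(Y_k) dz̄ is closed, so the Weierstrass representation formulas define surface coordinates x^k in ℝ⁴ on any simply connected subdomain. -/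

import Mathlib

open ComplexConjugate

/-- The Wirtinger derivative `∂g = (∂g/∂x − i ∂g/∂y)/2` of `g : ℂ → ℂ`. -/
noncomputable def wdz (g : ℂ → ℂ) (z : ℂ) : ℂ :=
  (fderiv ℝ g z 1 - Complex.I * fderiv ℝ g z Complex.I) / 2

/-- The Wirtinger derivative `∂̄g = (∂g/∂x + i ∂g/∂y)/2` of `g : ℂ → ℂ`. -/
noncomputable def wdzbar (g : ℂ → ℂ) (z : ℂ) : ℂ :=
  (fderiv ℝ g z 1 + Complex.I * fderiv ℝ g z Complex.I) / 2

lemma wdzbar_mul (f g : ℂ → ℂ) (z : ℂ) (hf : DifferentiableAt ℝ f z)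
    (hg : DifferentiableAt ℝ g z) :
    wdzbar (fun w => f w * g w) z = wdzbar f z * g z + f z * wdzbar g z := by
  simp only [wdzbar, fderiv_fun_mul hf hg, ContinuousLinearMap.add_apply,
    ContinuousLinearMap.smul_apply, smul_eq_mul]
  ring

lemma fderiv_conj_comp (f : ℂ → ℂ) (z : ℂ) (hf : DifferentiableAt ℝ f z) :
    fderiv ℝ (fun w => conj (f w)) z =
      Complex.conjCLE.toContinuousLinearMap.comp (fderiv ℝ f z) :=
  (Complex.conjCLE.toContinuousLinearMap.hasFDerivAt.comp z hf.hasFDerivAt).fderiv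

lemma wdzbar_conj (f : ℂ → ℂ) (z : ℂ) (hf : DifferentiableAt ℝ f z) :
    wdzbar (fun w => conj (f w)) z = conj (wdz f z) := by
  simp only [wdzbar, wdz, fderiv_conj_comp f z hf, ContinuousLinearMap.coe_comp',
    Function.comp_apply, ContinuousLinearEquiv.coe_coe, Complex.conjCLE_apply,
    map_div₀, map_sub, map_mul, Complex.conj_I, map_ofNat]
  ring

lemma wdz_conj (f : ℂ → ℂ) (z : ℂ) (hf : DifferentiableAt ℝ f z) :
    wdz (fun w => conj (f w)) z = conj (wdzbar f z) := by
  simp only [wdzbar, wdz, fderiv_conj_comp f z hf, ContinuousLinearMap.coe_comp',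
    Function.comp_apply, ContinuousLinearEquiv.coe_coe, Complex.conjCLE_apply,
    map_div₀, map_add, map_mul, Complex.conj_I, map_ofNat]
  ring

lemma wdzbar_cmul_add (c : ℂ) (F G : ℂ → ℂ) (z : ℂ) (hF : DifferentiableAt ℝ F z)
    (hG : DifferentiableAt ℝ G z) :
    wdzbar (fun w => c * (F w + G w)) z = c * (wdzbar F z + wdzbar G z) := by
  simp only [wdzbar, fderiv_const_mul (hF.fun_add hG) c, fderiv_fun_add hF hG,
    ContinuousLinearMap.smul_apply, ContinuousLinearMap.add_apply, smul_eq_mul]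
  ring

lemma wdzbar_cmul_sub (c : ℂ) (F G : ℂ → ℂ) (z : ℂ) (hF : DifferentiableAt ℝ F z)
    (hG : DifferentiableAt ℝ G z) :
    wdzbar (fun w => c * (F w - G w)) z = c * (wdzbar F z - wdzbar G z) := by
  simp only [wdzbar, fderiv_const_mul (hF.fun_sub hG) c, fderiv_fun_sub hF hG,
    ContinuousLinearMap.smul_apply, ContinuousLinearMap.sub_apply, smul_eq_mul]
  ring

/-- if `ψ` solves `Dψ = 0` and `φ` solves `D^∨φ = 0` with (complex) potential
`U` on an open set `Ω`, then the four Weierstrass differentials `Y₁, …, Y₄` of the surface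
in `ℝ⁴` satisfy `∂̄Y_k = ∂(conj Y_k)` on `Ω`, i.e. the forms `Y_k dz + conj(Y_k) dz̄` are
closed. -/
theorem stmt8 (Ω : Set ℂ) (hΩ : IsOpen Ω)
    (U : ℂ → ℂ) (hU : ContDiffOn ℝ (⊤ : ℕ∞) U Ω)
    (ψ₁ ψ₂ φ₁ φ₂ : ℂ → ℂ)
    (hψ₁ : ContDiffOn ℝ (⊤ : ℕ∞) ψ₁ Ω) (hψ₂ : ContDiffOn ℝ (⊤ : ℕ∞) ψ₂ Ω)
    (hφ₁ : ContDiffOn ℝ (⊤ : ℕ∞) φ₁ Ω) (hφ₂ : ContDiffOn ℝ (⊤ : ℕ∞) φ₂ Ω)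
    (hψa : ∀ z ∈ Ω, wdzbar ψ₁ z = conj (U z) * ψ₂ z)
    (hψb : ∀ z ∈ Ω, wdz ψ₂ z = -U z * ψ₁ z)
    (hφa : ∀ z ∈ Ω, wdzbar φ₁ z = U z * φ₂ z)
    (hφb : ∀ z ∈ Ω, wdz φ₂ z = -conj (U z) * φ₁ z)
    (Y₁ Y₂ Y₃ Y₄ : ℂ → ℂ)
    (hY₁ : Y₁ = fun z => Complex.I / 2 * (conj (φ₂ z) * conj (ψ₂ z) + φ₁ z * ψ₁ z))
    (hY₂ : Y₂ = fun z => (1 : ℂ) / 2 * (conj (φ₂ z) * conj (ψ₂ z) - φ₁ z * ψ₁ z))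
    (hY₃ : Y₃ = fun z => (1 : ℂ) / 2 * (conj (φ₂ z) * ψ₁ z + φ₁ z * conj (ψ₂ z)))
    (hY₄ : Y₄ = fun z => Complex.I / 2 * (conj (φ₂ z) * ψ₁ z - φ₁ z * conj (ψ₂ z))) :
    ∀ z ∈ Ω,
      wdzbar Y₁ z = wdz (fun w => conj (Y₁ w)) z ∧
      wdzbar Y₂ z = wdz (fun w => conj (Y₂ w)) z ∧
      wdzbar Y₃ z = wdz (fun w => conj (Y₃ w)) z ∧
      wdzbar Y₄ z = wdz (fun w => conj (Y₄ w)) z := by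
  intro z hz
  have hmem := hΩ.mem_nhds hz
  have dψ₁ : DifferentiableAt ℝ ψ₁ z := (hψ₁.contDiffAt hmem).differentiableAt (by simp)
  have dψ₂ : DifferentiableAt ℝ ψ₂ z := (hψ₂.contDiffAt hmem).differentiableAt (by simp)
  have dφ₁ : DifferentiableAt ℝ φ₁ z := (hφ₁.contDiffAt hmem).differentiableAt (by simp)
  have dφ₂ : DifferentiableAt ℝ φ₂ z := (hφ₂.contDiffAt hmem).differentiableAt (by simp)
  -- derivatives of the conjugated functions
  have dcψ₂ : DifferentiableAt ℝ (fun w => conj (ψ₂ w)) z := dψ₂.star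
  have dcφ₂ : DifferentiableAt ℝ (fun w => conj (φ₂ w)) z := dφ₂.star
  -- wdzbar of the four basic products
  have hA : wdzbar (fun w => conj (φ₂ w) * conj (ψ₂ w)) z =
      conj (wdz φ₂ z) * conj (ψ₂ z) + conj (φ₂ z) * conj (wdz ψ₂ z) := by
    rw [wdzbar_mul _ _ z dcφ₂ dcψ₂, wdzbar_conj _ _ dφ₂, wdzbar_conj _ _ dψ₂]
  have hB : wdzbar (fun w => φ₁ w * ψ₁ w) z =
      wdzbar φ₁ z * ψ₁ z + φ₁ z * wdzbar ψ₁ z := wdzbar_mul _ _ z dφ₁ dψ₁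
  have hC : wdzbar (fun w => conj (φ₂ w) * ψ₁ w) z =
      conj (wdz φ₂ z) * ψ₁ z + conj (φ₂ z) * wdzbar ψ₁ z := by
    rw [wdzbar_mul _ _ z dcφ₂ dψ₁, wdzbar_conj _ _ dφ₂]
  have hD : wdzbar (fun w => φ₁ w * conj (ψ₂ w)) z =
      wdzbar φ₁ z * conj (ψ₂ z) + φ₁ z * conj (wdz ψ₂ z) := by
    rw [wdzbar_mul _ _ z dφ₁ dcψ₂, wdzbar_conj _ _ dψ₂]
  have ha := hψa z hz; have hb := hψb z hz; have hc := hφa z hz; have hd := hφb z hz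
  have dA : DifferentiableAt ℝ (fun w => conj (φ₂ w) * conj (ψ₂ w)) z := dcφ₂.mul dcψ₂
  have dB : DifferentiableAt ℝ (fun w => φ₁ w * ψ₁ w) z := dφ₁.mul dψ₁
  have dC : DifferentiableAt ℝ (fun w => conj (φ₂ w) * ψ₁ w) z := dcφ₂.mul dψ₁
  have dD : DifferentiableAt ℝ (fun w => φ₁ w * conj (ψ₂ w)) z := dφ₁.mul dcψ₂
  refine ⟨?_, ?_, ?_, ?_⟩
  · subst hY₁
    rw [wdz_conj _ _ ((dA.fun_add dB).const_mul _), wdzbar_cmul_add _ _ _ _ dA dB, hA, hB,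
      ha, hb, hc, hd]
    simp only [map_mul, map_add, map_neg, map_div₀, Complex.conj_conj, Complex.conj_I,
      map_ofNat]
    ring
  · subst hY₂
    rw [wdz_conj _ _ ((dA.fun_sub dB).const_mul _), wdzbar_cmul_sub _ _ _ _ dA dB, hA, hB,
      ha, hb, hc, hd]
    simp only [map_mul, map_add, map_sub, map_neg, map_div₀, Complex.conj_conj, Complex.conj_I,
      map_one, map_ofNat]
    ring
  · subst hY₃
    rw [wdz_conj _ _ ((dC.fun_add dD).const_mul _), wdzbar_cmul_add _ _ _ _ dC dD, hC, hD,
      ha, hb, hc, hd]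
    simp only [map_mul, map_add, map_neg, map_div₀, Complex.conj_conj, Complex.conj_I,
      map_one, map_ofNat]
    ring
  · subst hY₄
    rw [wdz_conj _ _ ((dC.fun_sub dD).const_mul _), wdzbar_cmul_sub _ _ _ _ dC dD, hC, hD,
      ha, hb, hc, hd]
    simp only [map_mul, map_add, map_sub, map_neg, map_div₀, Complex.conj_conj, Complex.conj_I,
      map_ofNat]
    ring
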